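/- Let S be a finite set of positive integers and 𝔥 = {T ⊆ S : T ≠ ∅, ∏_{s∈T} s is a perfect square}. Then ∑_{T∈𝔥} (−1)^{#T} ≥ −1. -/

import Mathlib

/-!
The subsets of `S` with square product are closed under symmetric difference, since
`∏ (T ∆ U) * (∏ (T ∩ U))² = ∏ T * ∏ U` and the factors are nonzero. On such a family the sign
`T ↦ (-1) ^ #T` is a character, so its sum is either `0` (if some member has odd size, pair `T`
with `T ∆ U`) or the size of the family. Either way it is nonnegative, and the empty set
contributes `1` to it.
-/

open Finset
open scoped symmDiff

variable {α : Type*} [DecidableEq α]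

namespace Finset

theorem prod_symmDiff_mul_prod_inter_sq {β : Type*} [CommMonoid β] (f : α → β) (s t : Finset α) :
    (∏ x ∈ s ∆ t, f x) * (∏ x ∈ s ∩ t, f x) ^ 2 = (∏ x ∈ s, f x) * ∏ x ∈ t, f x := by
  rw [symmDiff_eq_sup_sdiff_inf, sup_eq_union, inf_eq_inter, sq, ← mul_assoc,
    prod_sdiff inter_subset_union]
  exact prod_union_inter

theorem neg_one_pow_card_symmDiff (s t : Finset α) :
    (-1 : ℤ) ^ (s ∆ t).card = (-1) ^ s.card * (-1) ^ t.card := by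
  have h := prod_symmDiff_mul_prod_inter_sq (fun _ => (-1 : ℤ)) s t
  simpa only [prod_const, ← pow_mul, (even_two.mul_left _).neg_one_pow, mul_one] using h

theorem sum_neg_one_pow_card_eq_zero_of_odd {K : Finset (Finset α)}
    (hK : ∀ s ∈ K, ∀ t ∈ K, s ∆ t ∈ K) {u : Finset α} (hu : u ∈ K) (hodd : Odd u.card) :
    ∑ s ∈ K, (-1 : ℤ) ^ s.card = 0 := by
  have hsign (s : Finset α) : (-1 : ℤ) ^ (s ∆ u).card = -(-1) ^ s.card := by
    rw [neg_one_pow_card_symmDiff, hodd.neg_one_pow, mul_neg_one]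
  refine sum_involution (fun s _ => s ∆ u) (fun s _ => by rw [hsign, add_neg_cancel])
    (fun s _ hne hs => hne ?_) (fun s hs => hK s hs u hu)
    (fun s _ => symmDiff_symmDiff_cancel_right _ _)
  have : (-1 : ℤ) ^ s.card = -(-1) ^ s.card := by rw [← hsign, hs]
  linarith

theorem sum_neg_one_pow_card_nonneg_of_symmDiff_mem {K : Finset (Finset α)}
    (hK : ∀ s ∈ K, ∀ t ∈ K, s ∆ t ∈ K) :
    0 ≤ ∑ s ∈ K, (-1 : ℤ) ^ s.card := by
  by_cases hodd : ∃ u ∈ K, Odd u.card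
  · obtain ⟨u, hu, hodd⟩ := hodd
    exact (sum_neg_one_pow_card_eq_zero_of_odd hK hu hodd).ge
  · simp only [not_exists, not_and, Nat.not_odd_iff_even] at hodd
    exact sum_nonneg fun s hs => (hodd s hs).neg_one_pow.ge.trans' zero_le_one

end Finset

theorem Nat.isSquare_of_isSquare_mul_sq {a c : ℕ} (hc : c ≠ 0) (h : IsSquare (a * c ^ 2)) :
    IsSquare a := by
  rw [← Rat.isSquare_natCast_iff] at h ⊢
  have hc' : ((c : ℚ) ^ 2) ≠ 0 := by positivity
  simpa [hc'] using h.div (IsSquare.sq (c : ℚ))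

def squareProductSubsets (S : Finset ℕ) : Finset (Finset ℕ) :=
  S.powerset.filter fun T => IsSquare (∏ s ∈ T, s)

theorem symmDiff_mem_squareProductSubsets {S T U : Finset ℕ} (hpos : ∀ s ∈ S, 0 < s)
    (hT : T ∈ squareProductSubsets S) (hU : U ∈ squareProductSubsets S) :
    T ∆ U ∈ squareProductSubsets S := by
  simp only [squareProductSubsets, mem_filter, mem_powerset] at hT hU ⊢
  refine ⟨symmDiff_subset_union.trans (union_subset hT.1 hU.1), ?_⟩
  have hprod := prod_symmDiff_mul_prod_inter_sq id T U
  refine Nat.isSquare_of_isSquare_mul_sq ?_ (hprod ▸ hT.2.mul hU.2)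
  exact prod_ne_zero_iff.mpr fun s hs => (hpos s (hT.1 (mem_inter.mp hs).1)).ne'

theorem stmt_6 (S : Finset ℕ) (hpos : ∀ s ∈ S, 0 < s)
    (H : Finset (Finset ℕ))
    (hH : H = S.powerset.filter (fun T => T.Nonempty ∧ IsSquare (∏ s ∈ T, s))) :
    (∑ T ∈ H, (-1 : ℤ) ^ T.card) ≥ -1 := by
  have hH' : H = (squareProductSubsets S).erase ∅ := by
    ext T
    simp [hH, squareProductSubsets, nonempty_iff_ne_empty, and_left_comm]
  have hempty : ∅ ∈ squareProductSubsets S := by simp [squareProductSubsets]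
  have hnonneg := sum_neg_one_pow_card_nonneg_of_symmDiff_mem
    fun _ hT _ hU => symmDiff_mem_squareProductSubsets hpos hT hU
  rw [← add_sum_erase _ _ hempty, ← hH'] at hnonneg
  simp only [card_empty, pow_zero] at hnonneg
  linarith
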